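/- arXiv:0801.0798 — 5 statements merged into one kernel-verified Lean document; each statement's English description precedes it below -/
import Mathlib

section
/- For every integer a ≥ 2 there is a constant C = C(a) > 0 such that for every positive integer n there exists a 2-coloring χ of [1,n] with M_{χ,a}(n) ≤ n²/(2a(a²+2a+3)) + C·n. -/
/-- The number of monochromatic `(x, y, x + a*y)` triples of the 2-coloring `χ`
(with colors `true` = red, `false` = blue) of `[1, n]`: ordered pairs `(x, y)` of
positive integers with `x + a*y ≤ n` such that `χ x = χ y = χ (x + a*y)`. -/
def monoTriples (a n : ℕ) (χ : ℕ → Bool) : ℕ :=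
  ((Finset.Icc 1 n ×ˢ Finset.Icc 1 n).filter
    (fun p => p.1 + a * p.2 ≤ n ∧ χ p.1 = χ p.2 ∧ χ p.2 = χ (p.1 + a * p.2))).card

/-! Colour `[1, n]` blue on the interval `(p, q]` and red elsewhere, where `s = a² + 2a + 3`,
`p = (a + 1)n/s` and `q = (a² + 2a + 2)n/s`. A red `y` must satisfy `y ≤ p`, since `a q ≥ n`;
then `x + a y ≤ (a + 1)p ≤ q`, so a red triple has either `x + a y ≤ p` or `q < x ≤ n - a y`.
A blue triple has `p < y` and `p < x ≤ q - a y`. For each `y` the admissible `x` thus fill at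
most three intervals, of lengths `(c - a y)⁺` for `c = p`, `n - q` and `q - p`, and
`∑_{y > k} (c - a y)⁺ ≤ (c - a k)⁺² / (2a)` by telescoping. With `k = 0, 0, ⌊p⌋` the three
values of `c - a k` are `(a + 1)n/s`, `n/s` and `n/s + O(1)`, and `((a + 1)² + 1 + 1)/s² = 1/s`. -/

open Finset

section Ramp

variable {a : ℝ}

lemma two_mul_posPart_sub_add_sq_le (ha : 0 < a) (c : ℝ) :
    2 * a * (c - a)⁺ + ((c - a)⁺) ^ 2 ≤ (c⁺) ^ 2 := by
  rcases le_total (c - a) 0 with h | h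
  · simp [posPart_eq_zero.mpr h]
  · rw [posPart_eq_self.mpr h, posPart_eq_self.mpr (by linarith)]
    nlinarith

lemma two_mul_sum_Ioc_posPart_add_sq_le (ha : 0 < a) (c : ℝ) {k n : ℕ} (hkn : k ≤ n) :
    2 * a * ∑ y ∈ Ioc k n, (c - a * y)⁺ + ((c - a * n)⁺) ^ 2 ≤ ((c - a * k)⁺) ^ 2 := by
  induction n, hkn using Nat.le_induction with
  | base => simp
  | succ n hkn ih =>
    have step := two_mul_posPart_sub_add_sq_le ha (c - a * n)
    rw [sum_Ioc_succ_top hkn, Nat.cast_succ, mul_add_one, ← sub_sub]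
    linarith

lemma sum_Ioc_posPart_sub_mul_le (ha : 0 < a) (c : ℝ) (k n : ℕ) :
    ∑ y ∈ Ioc k n, (c - a * y)⁺ ≤ ((c - a * k)⁺) ^ 2 / (2 * a) := by
  rw [le_div_iff₀' (by positivity)]
  rcases le_or_gt k n with hkn | hnk
  · linarith [two_mul_sum_Ioc_posPart_add_sq_le ha c hkn, sq_nonneg (c - a * n)⁺]
  · simp [Ioc_eq_empty_of_le hnk.le]

end Ramp

lemma card_le_posPart_sub_add_one {S : Finset ℕ} {L R : ℝ} (hL : 0 ≤ L)
    (hS : ∀ x ∈ S, L < x ∧ (x : ℝ) ≤ R) : (#S : ℝ) ≤ (R - L)⁺ + 1 := by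
  obtain rfl | ⟨x, hx⟩ := S.eq_empty_or_nonempty
  · simp [add_nonneg, posPart_nonneg]
  have hLR : L ≤ R := (hS x hx).1.le.trans (hS x hx).2
  have hsub : S ⊆ Ioc ⌊L⌋₊ ⌊R⌋₊ := fun x hx =>
    mem_Ioc.mpr ⟨(Nat.floor_lt hL).mpr (hS x hx).1, Nat.le_floor (hS x hx).2⟩
  calc (#S : ℝ) ≤ ((⌊R⌋₊ - ⌊L⌋₊ : ℕ) : ℝ) := by
        exact_mod_cast Nat.card_Ioc _ _ ▸ card_le_card hsub
    _ ≤ R - L + 1 := by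
        rw [Nat.cast_sub (Nat.floor_mono hLR)]
        linarith [Nat.floor_le (hL.trans hLR), Nat.lt_floor_add_one L]
    _ ≤ (R - L)⁺ + 1 := by linarith [le_posPart (R - L)]

def monoFiber (a n : ℕ) (χ : ℕ → Bool) (y : ℕ) : Finset ℕ :=
  {x ∈ Icc 1 n | x + a * y ≤ n ∧ χ x = χ y ∧ χ y = χ (x + a * y)}

lemma monoTriples_eq_sum_card_monoFiber (a n : ℕ) (χ : ℕ → Bool) :
    monoTriples a n χ = ∑ y ∈ Icc 1 n, #(monoFiber a n χ y) := by
  simp only [monoTriples, monoFiber, card_filter, sum_product_right]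

noncomputable def intervalColoring (p q : ℝ) (t : ℕ) : Bool := decide ((t : ℝ) ≤ p ∨ q < t)

section IntervalColoring

variable {a n x y : ℕ} {p q : ℝ}

lemma mem_monoFiber_intervalColoring (hpq : (a + 1) * p ≤ q) (hq : n ≤ a * q)
    (hx : x ∈ monoFiber a n (intervalColoring p q) y) :
    (0 < (x : ℝ) ∧ (x : ℝ) ≤ p - a * y) ∨ (q < x ∧ (x : ℝ) ≤ n - a * y) ∨
      (p < y ∧ p < (x : ℝ) ∧ (x : ℝ) ≤ q - a * y) := by
  simp only [monoFiber, intervalColoring, mem_filter, mem_Icc, decide_eq_decide] at hx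
  obtain ⟨⟨hx1, -⟩, hxn, hxy, hyz⟩ := hx
  have hx1' : (1 : ℝ) ≤ x := by exact_mod_cast hx1
  have hxn' : (x : ℝ) + a * y ≤ n := by exact_mod_cast hxn
  push_cast at hyz
  have ha : (0 : ℝ) ≤ a := Nat.cast_nonneg a
  by_cases hyp : (y : ℝ) ≤ p
  · have hz := hyz.mp (Or.inl hyp)
    rcases hxy.mpr (Or.inl hyp) with hxp | hxq
    · rcases hz with hzp | hzq
      · left; constructor <;> linarith
      · nlinarith [mul_le_mul_of_nonneg_left hyp ha]
    · right; left; constructor <;> linarith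
  · by_cases hyq : q < y
    · nlinarith [mul_le_mul_of_nonneg_left hyq.le ha]
    · have hyb : ¬((y : ℝ) ≤ p ∨ q < y) := by tauto
      have hxb := mt hxy.mp hyb
      have hzb := mt hyz.mpr hyb
      push Not at hyb hxb hzb
      right; right
      exact ⟨hyb.1, hxb.1, by linarith [hzb.2]⟩

lemma card_monoFiber_intervalColoring_le (hp : 0 ≤ p) (hpq : (a + 1) * p ≤ q)
    (hq : n ≤ a * q) (y : ℕ) :
    (#(monoFiber a n (intervalColoring p q) y) : ℝ) ≤
      ((p - a * y)⁺ + 1) + ((n - q - a * y)⁺ + 1) +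
        if p < y then (q - p - a * y)⁺ + 1 else 0 := by
  set F := monoFiber a n (intervalColoring p q) y
  have hcover : F ⊆ {x ∈ F | 0 < (x : ℝ) ∧ (x : ℝ) ≤ p - a * y} ∪
      {x ∈ F | q < x ∧ (x : ℝ) ≤ n - a * y} ∪
      {x ∈ F | p < y ∧ p < (x : ℝ) ∧ (x : ℝ) ≤ q - a * y} := fun x hx => by
    simpa [hx, or_assoc] using mem_monoFiber_intervalColoring hpq hq hx
  have hq0 : 0 ≤ q := le_trans (by positivity) hpq
  have h1 := card_le_posPart_sub_add_one le_rfl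
    (S := {x ∈ F | 0 < (x : ℝ) ∧ (x : ℝ) ≤ p - a * y}) fun x hx => (mem_filter.1 hx).2
  have h2 := card_le_posPart_sub_add_one hq0
    (S := {x ∈ F | q < x ∧ (x : ℝ) ≤ n - a * y}) fun x hx => (mem_filter.1 hx).2
  have h3 : (#(F.filter fun x : ℕ => p < y ∧ p < (x : ℝ) ∧ (x : ℝ) ≤ q - a * y) : ℝ) ≤
      if p < y then (q - p - a * y)⁺ + 1 else 0 := by
    split_ifs with hy
    · rw [sub_right_comm]
      exact card_le_posPart_sub_add_one hp fun x hx => (mem_filter.1 hx).2.2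
    · simp [hy]
  have hcard := (card_le_card hcover).trans
    ((card_union_le _ _).trans (Nat.add_le_add_right (card_union_le _ _) _))
  rw [sub_zero] at h1
  rw [sub_right_comm] at h2
  refine ((Nat.cast_le (α := ℝ)).mpr hcard).trans ?_
  push_cast
  exact add_le_add (add_le_add h1 h2) h3

lemma monoTriples_intervalColoring_le (ha : 0 < a) (hp : 0 ≤ p) (hpq : (a + 1) * p ≤ q)
    (hq : n ≤ a * q) :
    (monoTriples a n (intervalColoring p q) : ℝ) ≤
      (p ^ 2 + ((n - q)⁺) ^ 2 + ((q - p - a * p + a)⁺) ^ 2) / (2 * a) + 3 * n := by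
  have ha' : (0 : ℝ) < a := by exact_mod_cast ha
  have hIcc : Icc 1 n = Ioc 0 n := Icc_add_one_left_eq_Ioc 0 n
  have h1 : ∑ y ∈ Icc 1 n, (p - a * y)⁺ ≤ p ^ 2 / (2 * a) := by
    simpa [hIcc, posPart_eq_self.mpr hp] using sum_Ioc_posPart_sub_mul_le ha' p 0 n
  have h2 : ∑ y ∈ Icc 1 n, (n - q - a * y)⁺ ≤ ((n - q)⁺) ^ 2 / (2 * a) := by
    simpa [hIcc] using sum_Ioc_posPart_sub_mul_le ha' (n - q) 0 n
  have h3 : ∑ y ∈ Icc 1 n, (if p < y then (q - p - a * y)⁺ + 1 else 0) ≤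
      ((q - p - a * p + a)⁺) ^ 2 / (2 * a) + n := by
    have hsub : (Icc 1 n).filter (fun y : ℕ => p < y) ⊆ Ioc ⌊p⌋₊ n := fun y hy => by
      simp only [mem_filter, mem_Icc] at hy
      exact mem_Ioc.mpr ⟨(Nat.floor_lt hp).mpr hy.2, hy.1.2⟩
    have hfloor : ((q - p - a * ⌊p⌋₊)⁺) ^ 2 ≤ ((q - p - a * p + a)⁺) ^ 2 := by
      refine pow_le_pow_left₀ (posPart_nonneg _) (posPart_mono ?_) 2
      nlinarith [Nat.lt_floor_add_one p]
    calc ∑ y ∈ Icc 1 n, (if p < y then (q - p - a * y)⁺ + 1 else 0)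
        = ∑ y ∈ (Icc 1 n).filter (fun y : ℕ => p < y), ((q - p - a * y)⁺ + 1) :=
          (sum_filter _ _).symm
      _ ≤ ∑ y ∈ Ioc ⌊p⌋₊ n, ((q - p - a * y)⁺ + 1) :=
          sum_le_sum_of_subset_of_nonneg hsub fun _ _ _ => by positivity
      _ ≤ ((q - p - a * p + a)⁺) ^ 2 / (2 * a) + n := by
          rw [sum_add_distrib, sum_const, Nat.card_Ioc, nsmul_one]
          have hramp := sum_Ioc_posPart_sub_mul_le ha' (q - p) ⌊p⌋₊ n
          have hcard : ((n - ⌊p⌋₊ : ℕ) : ℝ) ≤ n := by exact_mod_cast Nat.sub_le n ⌊p⌋₊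
          linarith [div_le_div_of_nonneg_right hfloor (by positivity : (0 : ℝ) ≤ 2 * a)]
  rw [monoTriples_eq_sum_card_monoFiber, Nat.cast_sum]
  refine (sum_le_sum fun y _ => card_monoFiber_intervalColoring_le hp hpq hq y).trans ?_
  simp only [sum_add_distrib, sum_const, Nat.card_Icc, add_tsub_cancel_right, nsmul_one]
  rw [add_div, add_div]
  linarith

end IntervalColoring

/-- For every `n` there is a 2-coloring of `[1,n]` with at most
`n² / (2a(a² + 2a + 3)) + C·n` monochromatic `(x, y, x + a*y)` triples. -/
theorem exists_coloring_monoTriples_le (a : ℕ) (ha : 2 ≤ a) :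
    ∃ C : ℝ, 0 < C ∧ ∀ n : ℕ, 0 < n →
      ∃ χ : ℕ → Bool,
        (monoTriples a n χ : ℝ) ≤
          (n : ℝ) ^ 2 / (2 * a * ((a : ℝ) ^ 2 + 2 * a + 3)) + C * n := by
  have ha' : (2 : ℝ) ≤ a := by exact_mod_cast ha
  refine ⟨a + 4, by positivity, fun n hn => ?_⟩
  have hn' : (1 : ℝ) ≤ n := by exact_mod_cast hn
  set s : ℝ := a ^ 2 + 2 * a + 3 with hs_def
  have hs : 0 < s := by positivity
  set p : ℝ := (a + 1) * n / s
  set q : ℝ := (a ^ 2 + 2 * a + 2) * n / s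
  have hgap : n - q = n / s := by simp only [q, s]; field_simp; ring
  have hmid : q - p - a * p + a = n / s + a := by simp only [p, q, s]; field_simp; ring
  have hpq : (a + 1) * p ≤ q := by
    rw [mul_div_assoc', div_le_div_iff_of_pos_right hs]
    nlinarith
  have hq : n ≤ a * q := by
    have hcoef : (a : ℝ) ^ 2 + 2 * a + 3 ≤ a * (a ^ 2 + 2 * a + 2) := by nlinarith
    rw [mul_div_assoc', le_div_iff₀ hs, hs_def]
    nlinarith [mul_le_mul_of_nonneg_left hcoef (Nat.cast_nonneg (α := ℝ) n)]
  refine ⟨intervalColoring p q,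
    (monoTriples_intervalColoring_le (by omega) (by positivity) hpq hq).trans ?_⟩
  rw [hgap, hmid, posPart_eq_self.mpr (by positivity), posPart_eq_self.mpr (by positivity)]
  have hexpand : (p ^ 2 + (n / s) ^ 2 + (n / s + a) ^ 2) / (2 * a) + 3 * n =
      n ^ 2 / (2 * a * s) + n / s + a / 2 + 3 * n := by
    simp only [p, s]
    field_simp
    ring
  rw [hexpand]
  have hns : (n : ℝ) / s ≤ n := div_le_self (by positivity) (by nlinarith)
  nlinarith
end

section
/- For every integer a ≥ 2 there is a constant C = C(a) > 0 such that for every positive integer n the following explicit 2-coloring χ of [1,n] satisfies |M_{χ,a}(n) − n²/(2a(a²+2a+3))| ≤ C·n: color x red if x ≤ ⌊(a+1)n/(a²+2a+3)⌋, blue if ⌊(a+1)n/(a²+2a+3)⌋ < x ≤ ⌊(a²+2a+2)n/(a²+2a+3)⌋, and red if x > ⌊(a²+2a+2)n/(a²+2a+3)⌋ (i.e., the coloring whose red, blue, red interval lengths are proportional to 1, a + 1/(a+1), 1/(a+1)). -/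
/-!
The coloring is red on `[1, r]`, blue on `(r, s]` and red on `(s, n]`. For these thresholds a
monochromatic triple `(x, y, x + a y)` is all red in `[1, r]`, all blue, or has `y ≤ r` and
`x, x + a y` in `(s, n]`; shifting coordinates identifies each family with the lattice triangle
`{x, y ≥ 1, x + a y ≤ m}` for `m = r, s - (a + 1) r, n - s`, which has `m² / (2a) + O(m)`
points. The real thresholds `(a + 1) n / D`, `(D - 1) n / D` (with `D = a² + 2a + 3`) are the
critical point of `r² + (s - (a + 1) r)² + (n - s)²`, where its value is `n² / D`; so rounding
them down changes this sum only by `O(1)`.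
-/

open Finset

def triangle (a m : ℕ) : Finset (ℕ × ℕ) :=
  {p ∈ Icc 1 m ×ˢ Icc 1 m | p.1 + a * p.2 ≤ m}

section
variable {a : ℕ}

lemma filter_add_mul_le_eq_Icc (ha : 0 < a) (m x : ℕ) :
    {y ∈ Icc 1 m | x + a * y ≤ m} = Icc 1 ((m - x) / a) := by
  ext y
  simp only [mem_filter, mem_Icc, Nat.le_div_iff_mul_le ha]
  have : y ≤ a * y := Nat.le_mul_of_pos_left y ha
  constructor <;> intro h <;> grind

lemma card_triangle (ha : 0 < a) (m : ℕ) : #(triangle a m) = ∑ k ∈ range m, k / a := by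
  rw [triangle, card_filter, sum_product]
  simp_rw [← card_filter, filter_add_mul_le_eq_Icc ha, Nat.card_Icc, Nat.add_sub_cancel]
  exact sum_nbij' (fun x => m - x) (fun k => m - k) (by intro x; simp; omega)
    (by intro k; simp; omega) (by intro x; simp; omega) (by intro k; simp; omega)
    (by intro x; simp)

lemma abs_card_triangle_sub_le (ha : 0 < a) (m : ℕ) :
    |(#(triangle a m) : ℝ) - (m : ℝ) ^ 2 / (2 * a)| ≤ (m : ℝ) := by
  have hsum : (∑ k ∈ range m, k) * 2 + m = m * m := by
    rw [sum_range_id_mul_two]; cases m <;> simp [Nat.succ_mul, Nat.mul_succ]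
  have hlow : ∑ k ∈ range m, a * (k / a) ≤ ∑ k ∈ range m, k :=
    sum_le_sum fun k _ => Nat.mul_div_le k a
  have hup : ∑ k ∈ range m, (k + 1) ≤ ∑ k ∈ range m, (a * (k / a) + a) :=
    sum_le_sum fun k _ => by linarith [Nat.lt_div_mul_add (a := k) ha, mul_comm a (k / a)]
  rw [sum_add_distrib, sum_add_distrib] at hup
  simp only [← mul_sum, ← card_triangle ha, sum_const, card_range, smul_eq_mul, mul_one]
    at hlow hup
  generalize #(triangle a m) = T at hlow hup ⊢
  have hgap_ge : (2 * a * T + m : ℝ) ≤ m * m := by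
    exact_mod_cast (by nlinarith : 2 * a * T + m ≤ m * m)
  have hgap_le : (m * m : ℝ) ≤ 2 * a * T + 2 * a * m := by
    exact_mod_cast (by nlinarith : m * m ≤ 2 * a * T + 2 * a * m)
  have haR : (0 : ℝ) < 2 * a := by positivity
  rw [show (T : ℝ) - m ^ 2 / (2 * a) = (2 * a * T - m ^ 2) / (2 * a) by field_simp, abs_div,
    abs_of_pos haR, div_le_iff₀ haR, abs_le]
  constructor <;> nlinarith

lemma card_shifted_triangle (ha : 0 < a) {m n : ℕ} (hm : m ≤ n) (u v : ℕ) :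
    #{p ∈ Icc 1 n ×ˢ Icc 1 n | u < p.1 ∧ v < p.2 ∧ p.1 + a * p.2 ≤ m} =
      #(triangle a (m - u - a * v)) := by
  refine card_nbij' (fun p => (p.1 - u, p.2 - v)) (fun p => (p.1 + u, p.2 + v)) ?_ ?_ ?_ ?_
  · rintro ⟨x, y⟩ h
    simp only [triangle, coe_filter, mem_product, mem_Icc, Set.mem_ofPred_eq] at h ⊢
    have hy : a * y = a * (y - v) + a * v := by rw [← mul_add, Nat.sub_add_cancel h.2.2.1.le]
    have := Nat.le_mul_of_pos_left (y - v) ha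
    omega
  · rintro ⟨x, y⟩ h
    simp only [triangle, coe_filter, mem_product, mem_Icc, Set.mem_ofPred_eq] at h ⊢
    have hy : a * (y + v) = a * y + a * v := mul_add a y v
    have := Nat.le_mul_of_pos_left y ha
    have := Nat.le_mul_of_pos_left v ha
    omega
  · rintro ⟨x, y⟩ h
    simp only [coe_filter, mem_product, mem_Icc, Set.mem_ofPred_eq] at h
    simp only [Prod.mk.injEq]
    omega
  · rintro ⟨x, y⟩ h
    simp

end

def redBlueRed (r s x : ℕ) : Bool := decide (x ≤ r ∨ s < x)

section
variable {a n r s : ℕ}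

lemma monoTriple_redBlueRed_iff (ha : 0 < a) (hrs : r + a * r ≤ s) (hsn : s ≤ n)
    (hns : n ≤ a * (s + 1)) (hnr : n ≤ s + a * (r + 1)) {x y : ℕ} (hx : 0 < x) (hy : 0 < y) :
    (x + a * y ≤ n ∧ redBlueRed r s x = redBlueRed r s y ∧
        redBlueRed r s y = redBlueRed r s (x + a * y)) ↔
      (0 < x ∧ 0 < y ∧ x + a * y ≤ r) ∨ (r < x ∧ r < y ∧ x + a * y ≤ s) ∨
        (s < x ∧ 0 < y ∧ x + a * y ≤ n) := by
  simp only [redBlueRed, decide_eq_decide]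
  rw [mul_add_one] at hns hnr
  have hay := Nat.le_mul_of_pos_left y ha
  rcases le_or_gt y r with hyr | hyr
  · have := Nat.mul_le_mul_left a hyr
    omega
  have := (mul_add_one a r).symm.trans_le (Nat.mul_le_mul_left a hyr)
  rcases le_or_gt y s with hys | hys
  · omega
  · have := (mul_add_one a s).symm.trans_le (Nat.mul_le_mul_left a hys)
    omega

lemma monoTriples_redBlueRed_eq (ha : 0 < a) (hrs : r + a * r ≤ s) (hsn : s ≤ n)
    (hns : n ≤ a * (s + 1)) (hnr : n ≤ s + a * (r + 1)) :
    monoTriples a n (redBlueRed r s) =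
      #(triangle a r) + #(triangle a (s - r - a * r)) + #(triangle a (n - s)) := by
  have hmono (p : ℕ × ℕ) (hp : p ∈ Icc 1 n ×ˢ Icc 1 n) :=
    monoTriple_redBlueRed_iff ha hrs hsn hns hnr (mem_Icc.1 (mem_product.1 hp).1).1
      (mem_Icc.1 (mem_product.1 hp).2).1
  rw [monoTriples, filter_congr hmono, filter_or, filter_or, card_union_of_disjoint,
    card_union_of_disjoint,
    card_shifted_triangle ha (by omega), card_shifted_triangle ha hsn,
    card_shifted_triangle ha le_rfl, add_assoc]
  · simp
  all_goals
    simp only [← filter_or, disjoint_filter]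
    intro p _ h1 h2
    omega

lemma abs_monoTriples_redBlueRed_sub_le (ha : 0 < a) (hrs : r + a * r ≤ s) (hsn : s ≤ n)
    (hns : n ≤ a * (s + 1)) (hnr : n ≤ s + a * (r + 1)) :
    |(monoTriples a n (redBlueRed r s) : ℝ) -
        ((r : ℝ) ^ 2 + ((s : ℝ) - r - a * r) ^ 2 + ((n : ℝ) - s) ^ 2) / (2 * a)| ≤
      (n : ℝ) := by
  have h₁ := abs_card_triangle_sub_le ha r
  have h₂ := abs_card_triangle_sub_le ha (s - r - a * r)
  have h₃ := abs_card_triangle_sub_le ha (n - s)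
  rw [Nat.cast_sub (by omega), Nat.cast_sub (by omega), Nat.cast_mul] at h₂
  rw [Nat.cast_sub hsn] at h₃
  rw [monoTriples_redBlueRed_eq ha hrs hsn hns hnr]
  push_cast
  calc _ = |(#(triangle a r) - (r : ℝ) ^ 2 / (2 * a)) +
          (#(triangle a (s - r - a * r)) - ((s : ℝ) - r - a * r) ^ 2 / (2 * a)) +
          (#(triangle a (n - s)) - ((n : ℝ) - s) ^ 2 / (2 * a))| := by ring_nf
    _ ≤ _ := (abs_add_three _ _ _).trans (by linarith [(by positivity : (0 : ℝ) ≤ a * r)])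

end

lemma abs_sq_add_sq_add_sq_sub_le {a n r s : ℝ} (ha : 0 ≤ a)
    (hr : r ≤ (a + 1) * n / (a ^ 2 + 2 * a + 3)) (hr' : (a + 1) * n / (a ^ 2 + 2 * a + 3) < r + 1)
    (hs : s ≤ (a ^ 2 + 2 * a + 2) * n / (a ^ 2 + 2 * a + 3))
    (hs' : (a ^ 2 + 2 * a + 2) * n / (a ^ 2 + 2 * a + 3) < s + 1) :
    |r ^ 2 + (s - r - a * r) ^ 2 + (n - s) ^ 2 - n ^ 2 / (a ^ 2 + 2 * a + 3)| ≤
      a ^ 2 + 2 * a + 3 := by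
  set e := (a + 1) * n / (a ^ 2 + 2 * a + 3) - r with he
  set f := (a ^ 2 + 2 * a + 2) * n / (a ^ 2 + 2 * a + 3) - s with hf
  have hD : a ^ 2 + 2 * a + 3 ≠ 0 := by positivity
  have key : r ^ 2 + (s - r - a * r) ^ 2 + (n - s) ^ 2 - n ^ 2 / (a ^ 2 + 2 * a + 3) =
      e ^ 2 + ((a + 1) * e - f) ^ 2 + f ^ 2 := by
    rw [he, hf]; field_simp; ring
  have hmix : |(a + 1) * e - f| ≤ a + 1 := abs_le.2 ⟨by nlinarith, by nlinarith⟩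
  rw [key, abs_of_nonneg (by positivity)]
  nlinarith [sq_abs ((a + 1) * e - f), abs_nonneg ((a + 1) * e - f)]

lemma div_lt_cast_div_add_one (p d : ℕ) : (p : ℝ) / d < (p / d : ℕ) + 1 := by
  rw [← Nat.floor_div_eq_div (K := ℝ)]
  exact Nat.lt_floor_add_one _

lemma redBlueRed_thresholds {a : ℕ} (ha : 2 ≤ a) (n : ℕ) :
    let D := a ^ 2 + 2 * a + 3
    let r := (a + 1) * n / D
    let s := (a ^ 2 + 2 * a + 2) * n / D
    r + a * r ≤ s ∧ s ≤ n ∧ n ≤ a * (s + 1) ∧ n ≤ s + a * (r + 1) := by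
  intro D r s
  have hDa : D = a ^ 2 + 2 * a + 3 := rfl
  have hD : 0 < D := by positivity
  have hr : (a + 1) * n < D * (r + 1) := Nat.lt_mul_div_succ _ hD
  have hs : (a ^ 2 + 2 * a + 2) * n < D * (s + 1) := Nat.lt_mul_div_succ _ hD
  refine ⟨?_, Nat.div_le_of_le_mul (by nlinarith), ?_, ?_⟩
  · rw [Nat.le_div_iff_mul_le hD]
    have : r * D ≤ (a + 1) * n := Nat.div_mul_le_self _ _
    nlinarith
  · refine Nat.le_of_lt (Nat.lt_of_mul_lt_mul_left (a := D) ?_)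
    have hDle : D ≤ a * (a ^ 2 + 2 * a + 2) := by rw [hDa]; nlinarith
    nlinarith [Nat.mul_le_mul_right n hDle, Nat.mul_lt_mul_of_pos_left hs (by omega : 0 < a)]
  · refine Nat.le_of_lt_succ (Nat.lt_of_mul_lt_mul_left (a := D) ?_)
    nlinarith

/-- The explicit red-blue-red coloring with interval lengths proportional to
`1, a + 1/(a+1), 1/(a+1)` (i.e. red up to `⌊(a+1)n/(a²+2a+3)⌋`, blue up to
`⌊(a²+2a+2)n/(a²+2a+3)⌋`, red afterwards) has
`n² / (2a(a² + 2a + 3)) + O(n)` monochromatic `(x, y, x + a*y)` triples. -/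
theorem explicit_coloring_monoTriples (a : ℕ) (ha : 2 ≤ a) :
    ∃ C : ℝ, 0 < C ∧ ∀ n : ℕ, 0 < n →
      |(monoTriples a n (fun x =>
          decide (x ≤ (a + 1) * n / (a ^ 2 + 2 * a + 3) ∨
            (a ^ 2 + 2 * a + 2) * n / (a ^ 2 + 2 * a + 3) < x)) : ℝ)
        - (n : ℝ) ^ 2 / (2 * a * ((a : ℝ) ^ 2 + 2 * a + 3))| ≤ C * n := by
  have haR : (0 : ℝ) < 2 * a := by positivity
  refine ⟨1 + ((a : ℝ) ^ 2 + 2 * a + 3) / (2 * a), by positivity, fun n hn => ?_⟩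
  obtain ⟨hrs, hsn, hns, hnr⟩ := redBlueRed_thresholds ha n
  have hr := Nat.cast_div_le (α := ℝ) (m := (a + 1) * n) (n := a ^ 2 + 2 * a + 3)
  have hr' := div_lt_cast_div_add_one ((a + 1) * n) (a ^ 2 + 2 * a + 3)
  have hs := Nat.cast_div_le (α := ℝ) (m := (a ^ 2 + 2 * a + 2) * n) (n := a ^ 2 + 2 * a + 3)
  have hs' := div_lt_cast_div_add_one ((a ^ 2 + 2 * a + 2) * n) (a ^ 2 + 2 * a + 3)
  push_cast at hr hr' hs hs'
  set r := (a + 1) * n / (a ^ 2 + 2 * a + 3)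
  set s := (a ^ 2 + 2 * a + 2) * n / (a ^ 2 + 2 * a + 3)
  set D : ℝ := (a : ℝ) ^ 2 + 2 * a + 3
  set Q : ℝ := (r : ℝ) ^ 2 + ((s : ℝ) - r - a * r) ^ 2 + ((n : ℝ) - s) ^ 2
  have hQ : |Q - n ^ 2 / D| ≤ D := abs_sq_add_sq_add_sq_sub_le (Nat.cast_nonneg a) hr hr' hs hs'
  have hQ' : |Q / (2 * a) - n ^ 2 / (2 * a * D)| ≤ D / (2 * a) := by
    rw [show Q / (2 * a) - n ^ 2 / (2 * a * D) = (Q - n ^ 2 / D) / (2 * a) by field_simp,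
      abs_div, abs_of_pos haR]
    exact div_le_div_of_nonneg_right hQ haR.le
  have hn1 : (1 : ℝ) ≤ n := by exact_mod_cast hn
  calc _ ≤ _ + _ := abs_sub_le _ (Q / (2 * a)) _
    _ ≤ n + D / (2 * a) :=
      add_le_add (abs_monoTriples_redBlueRed_sub_le (by omega) hrs hsn hns hnr) hQ'
    _ ≤ (1 + D / (2 * a)) * n := by nlinarith [(by positivity : 0 ≤ D / (2 * a))]
end

section
/- (Lemma 1) Let a ≥ 2 be an integer, let n be a positive integer divisible by a, and let χ be a 2-coloring of [1,n]. Then the number of pairs (x,y) with 1 ≤ x < y ≤ n, y − x divisible by a, and χ(x) ≠ χ(y) is at most |R|·|B|/a, where |R| and |B| are the numbers of red and blue elements of {1,…,n}. -/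
/-!
Pairs with `a ∣ y - x` lie inside a residue class mod `a`, and each of the `a` classes has
`n / a` elements. If class `i` has `rᵢ` red and `n / a - rᵢ` blue elements, the number of
bichromatic pairs is `∑ rᵢ (n / a - rᵢ) = (n / a) |R| - ∑ rᵢ²`, and Cauchy–Schwarz,
`∑ rᵢ² ≥ |R|² / a`, bounds this by `|R| (n - |R|) / a = |R| |B| / a`.
-/

open Finset

theorem card_mul_sum_mul_le_sum_mul_sum_of_add_eq {ι R : Type*} [CommRing R] [LinearOrder R]
    [IsStrictOrderedRing R] (s : Finset ι) (r b : ι → R) (m : R)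
    (h : ∀ i ∈ s, r i + b i = m) :
    #s * ∑ i ∈ s, r i * b i ≤ (∑ i ∈ s, r i) * ∑ i ∈ s, b i := by
  have hb : ∀ i ∈ s, b i = m - r i := fun i hi => eq_sub_of_add_eq' (h i hi)
  rw [sum_congr rfl hb, sum_congr rfl fun i hi => congrArg (r i * ·) (hb i hi)]
  simp only [mul_sub, sum_sub_distrib, sum_const, nsmul_eq_mul, ← sum_mul, ← sq]
  nlinarith [sq_sum_le_card_mul_sum_sq (s := s) (f := r)]

theorem card_mul_card_red_blue_sameFiber_le {α ι : Type*} [DecidableEq ι] {s : Finset α}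
    {t : Finset ι} {f : α → ι} (hf : Set.MapsTo f s t) {m : ℕ}
    (hm : ∀ i ∈ t, #{x ∈ s | f x = i} = m) (χ : α → Bool) :
    #t * #{p ∈ {x ∈ s | χ x = true} ×ˢ {x ∈ s | χ x = false} | f p.1 = f p.2} ≤
      #{x ∈ s | χ x = true} * #{x ∈ s | χ x = false} := by
  set R := {x ∈ s | χ x = true}
  set B := {x ∈ s | χ x = false}
  have hpairs : #{p ∈ R ×ˢ B | f p.1 = f p.2} =
      ∑ i ∈ t, #{x ∈ R | f x = i} * #{x ∈ B | f x = i} := by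
    rw [card_eq_sum_card_fiberwise (f := fun p => f p.1) fun p hp => hf (by simp_all [R])]
    refine sum_congr rfl fun i _ => ?_
    rw [← card_product, filter_filter]
    congr 1
    ext ⟨x, y⟩
    simp only [mem_filter, mem_product]
    grind
  have hclass : ∀ i ∈ t, #{x ∈ R | f x = i} + #{x ∈ B | f x = i} = m := by
    intro i hi
    rw [← hm i hi, ← card_filter_add_card_filter_not (s := {x ∈ s | f x = i}) (χ · = true)]
    simp only [R, B, filter_filter, Bool.not_eq_true, and_comm]
  have hR : #R = ∑ i ∈ t, #{x ∈ R | f x = i} :=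
    card_eq_sum_card_fiberwise fun x hx => hf (mem_filter.1 hx).1
  have hB : #B = ∑ i ∈ t, #{x ∈ B | f x = i} :=
    card_eq_sum_card_fiberwise fun x hx => hf (mem_filter.1 hx).1
  rw [hpairs, hR, hB]
  exact_mod_cast card_mul_sum_mul_le_sum_mul_sum_of_add_eq (R := ℤ) t
    (fun i => #{x ∈ R | f x = i}) (fun i => #{x ∈ B | f x = i}) m
    fun i hi => by exact_mod_cast hclass i hi

theorem card_lt_bichromatic_eq_card_red_blue {α : Type*} [LinearOrder α] (s : Finset α)
    (r : α → α → Prop) [DecidableRel r] (hr : ∀ x y, r x y → r y x) (χ : α → Bool) :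
    #{p ∈ s ×ˢ s | p.1 < p.2 ∧ r p.1 p.2 ∧ χ p.1 ≠ χ p.2} =
      #{p ∈ {x ∈ s | χ x = true} ×ˢ {x ∈ s | χ x = false} | r p.1 p.2} := by
  apply card_nbij' (fun p => if χ p.1 then p else p.swap)
    (fun q => if q.1 < q.2 then q else q.swap)
  all_goals
    rintro ⟨x, y⟩ h
    simp only [coe_filter, mem_product] at h ⊢
    have := hr x y
    cases hx : χ x <;> cases hy : χ y <;> grind

theorem Nat.Icc_one_filter_modEq_card_of_dvd {a n : ℕ} (ha : 0 < a) (hdvd : a ∣ n) (j : ℕ) :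
    #{x ∈ Icc 1 n | x ≡ j [MOD a]} = n / a := by
  have hshift : #{x ∈ Icc 1 n | x ≡ j [MOD a]} = n.count (· + 1 ≡ j [MOD a]) := by
    have : Icc 1 n = (range n).map (addRightEmbedding 1) := by
      rw [range_eq_Ico, map_add_right_Ico, Ico_add_one_right_eq_Icc, zero_add]
    rw [Nat.count_eq_card_filter_range, this, filter_map, card_map]
    rfl
  have hn0 : n ≡ 0 [MOD a] := Nat.modEq_zero_iff_dvd.2 hdvd
  have hn_iff : n ≡ j [MOD a] ↔ 0 ≡ j [MOD a] := ⟨hn0.symm.trans, hn0.trans⟩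
  -- `count` over `[0, n]` two ways, dropping `0` or dropping `n`; they agree as `n ≡ 0`
  have hcount := Nat.count_succ' (· ≡ j [MOD a]) n
  rw [Nat.count_succ, Nat.count_modEq_card n ha, Nat.mod_eq_zero_of_dvd hdvd] at hcount
  simp only [Nat.not_lt_zero, if_false, hn_iff] at hcount
  omega

theorem nonmono_diff_divisible_le_general (a n : ℕ) (hn : 0 < n)
    (hdvd : a ∣ n) (χ : ℕ → Bool) :
    (((Finset.Icc 1 n ×ˢ Finset.Icc 1 n).filter
        (fun p => p.1 < p.2 ∧ a ∣ p.2 - p.1 ∧ χ p.1 ≠ χ p.2)).card : ℝ) ≤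
      (((Finset.Icc 1 n).filter (fun x => χ x = true)).card : ℝ) *
        (((Finset.Icc 1 n).filter (fun x => χ x = false)).card : ℝ) / a := by
  have ha : 0 < a := Nat.pos_of_dvd_of_pos hdvd hn
  have hpairs : #{p ∈ Icc 1 n ×ˢ Icc 1 n | p.1 < p.2 ∧ a ∣ p.2 - p.1 ∧ χ p.1 ≠ χ p.2} =
      #{p ∈ {x ∈ Icc 1 n | χ x = true} ×ˢ {x ∈ Icc 1 n | χ x = false} |
        p.1 ≡ p.2 [MOD a]} := by
    rw [← card_lt_bichromatic_eq_card_red_blue _ (· ≡ · [MOD a]) fun _ _ => Nat.ModEq.symm]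
    exact congrArg card <| filter_congr fun p _ =>
      and_congr_right fun hlt => and_congr_left' (Nat.modEq_iff_dvd' hlt.le).symm
  have hclasses := card_mul_card_red_blue_sameFiber_le (t := range a) (f := (· % a))
    (fun x _ => mem_range.2 (Nat.mod_lt x ha))
    (fun i hi => by
      simpa [Nat.ModEq, Nat.mod_eq_of_lt (mem_range.1 hi)] using Nat.Icc_one_filter_modEq_card_of_dvd ha hdvd i)
    χ
  rw [card_range] at hclasses
  rw [hpairs, le_div_iff₀ (by positivity), mul_comm]
  exact_mod_cast hclasses

/-- (Lemma 1) Let `a ≥ 2`, let `a ∣ n`, and let `χ` be a 2-coloring of `[1,n]`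
(`true` = red, `false` = blue). The number of pairs `(x, y)` with
`1 ≤ x < y ≤ n`, `a ∣ y − x`, and `χ x ≠ χ y` is at most `|R|·|B| / a`. -/
theorem nonmono_diff_divisible_le (a n : ℕ) (ha : 2 ≤ a) (hn : 0 < n)
    (hdvd : a ∣ n) (χ : ℕ → Bool) :
    (((Finset.Icc 1 n ×ˢ Finset.Icc 1 n).filter
        (fun p => p.1 < p.2 ∧ a ∣ p.2 - p.1 ∧ χ p.1 ≠ χ p.2)).card : ℝ) ≤
      (((Finset.Icc 1 n).filter (fun x => χ x = true)).card : ℝ) *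
        (((Finset.Icc 1 n).filter (fun x => χ x = false)).card : ℝ) / a :=
  nonmono_diff_divisible_le_general a n hn hdvd χ
end

section
/- (Lemma 2) Let a ≥ 2 be an integer, let n be a positive integer divisible by a, and let χ be a 2-coloring of [1,n]. Then Q ≤ |R|·|B|/a + #{ordered pairs (x,y) with 1 ≤ x, y ≤ n, y − ax ≥ 0, and χ(x) ≠ χ(y)} + #{ordered pairs (x,y) with 1 ≤ x, y, y + ax ≤ n, and χ(x) ≠ χ(y)}, where Q is twice the number of non-monochromatic (x,y,x+ay) triples. -/
/-!
In a non-monochromatic triple `(x, y, x + a*y)` exactly two of the pairs `(x, y)`,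
`(y, x + a*y)`, `(x, x + a*y)` are bichromatic, so `Q` counts bichromatic pairs of these three
kinds. Those of the first two kinds inject into the two pair sets of the bound. Those of the
third kind are bichromatic pairs inside one residue class mod `a`. If class `i` has `r_i` red
and `b_i` blue elements, then `r_i + b_i = n / a` for every `i`, and Cauchy–Schwarz gives
`∑ r_i b_i ≤ |R| |B| / a`.
-/

/-- The number of non-monochromatic `(x, y, x + a*y)` triples of the 2-coloring `χ`
of `[1, n]`: ordered pairs `(x, y)` of positive integers with `x + a*y ≤ n` such
that `x, y, x + a*y` do not all receive the same color. -/
def nonMonoTriples (a n : ℕ) (χ : ℕ → Bool) : ℕ :=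
  ((Finset.Icc 1 n ×ˢ Finset.Icc 1 n).filter
    (fun p => p.1 + a * p.2 ≤ n ∧
      ¬(χ p.1 = χ p.2 ∧ χ p.2 = χ (p.1 + a * p.2)))).card

open Finset

lemma two_mul_card_filter_not_mono_eq {α : Type*} (s : Finset α) (c₁ c₂ c₃ : α → Bool) :
    2 * #{x ∈ s | ¬(c₁ x = c₂ x ∧ c₂ x = c₃ x)} =
      #{x ∈ s | c₁ x ≠ c₂ x} + #{x ∈ s | c₂ x ≠ c₃ x} + #{x ∈ s | c₁ x ≠ c₃ x} := by
  simp only [card_filter, mul_sum, ← sum_add_distrib]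
  refine sum_congr rfl fun x _ => ?_
  cases c₁ x <;> cases c₂ x <;> cases c₃ x <;> rfl

lemma card_mul_sum_mul_le_of_add_eq {ι : Type*} (t : Finset ι) (r b : ι → ℝ) (m : ℝ)
    (h : ∀ i ∈ t, r i + b i = m) :
    #t * ∑ i ∈ t, r i * b i ≤ (∑ i ∈ t, r i) * ∑ i ∈ t, b i := by
  have hb : ∑ i ∈ t, b i = #t * m - ∑ i ∈ t, r i := by
    rw [eq_sub_iff_add_eq, ← sum_add_distrib, ← nsmul_eq_mul, ← sum_const]
    exact sum_congr rfl fun i hi => by rw [add_comm, h i hi]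
  have hrb : ∑ i ∈ t, r i * b i = m * ∑ i ∈ t, r i - ∑ i ∈ t, r i ^ 2 := by
    rw [mul_sum, ← sum_sub_distrib]
    exact sum_congr rfl fun i hi => by rw [← h i hi]; ring
  rw [hb, hrb]
  nlinarith [sq_sum_le_card_mul_sum_sq (s := t) (f := r)]

lemma card_mul_card_sameFiber_le {α ι : Type*} [DecidableEq ι] (s : Finset α) (t : Finset ι)
    (f : α → ι) (hf : ∀ x ∈ s, f x ∈ t) (m : ℕ) (hm : ∀ i ∈ t, #{x ∈ s | f x = i} = m)
    (χ : α → Bool) :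
    #t * #{p ∈ s ×ˢ s | f p.1 = f p.2 ∧ χ p.1 = true ∧ χ p.2 = false} ≤
      #{x ∈ s | χ x = true} * #{x ∈ s | χ x = false} := by
  have hsum (c : Bool) : #{x ∈ s | χ x = c} = ∑ i ∈ t, #{x ∈ s | f x = i ∧ χ x = c} := by
    rw [card_eq_sum_card_fiberwise fun x hx => hf x (mem_filter.1 hx).1]
    simp only [filter_filter, and_comm]
  have hpairs : #{p ∈ s ×ˢ s | f p.1 = f p.2 ∧ χ p.1 = true ∧ χ p.2 = false} =
      ∑ i ∈ t, #{x ∈ s | f x = i ∧ χ x = true} * #{x ∈ s | f x = i ∧ χ x = false} := by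
    rw [card_eq_sum_card_fiberwise (f := fun p => f p.1)
      fun p hp => hf p.1 (mem_product.1 (mem_filter.1 hp).1).1]
    refine sum_congr rfl fun i _ => ?_
    rw [← card_product]
    congr 1
    ext ⟨x, y⟩
    simp only [mem_filter, mem_product]
    constructor
    · rintro ⟨⟨⟨hx, hy⟩, hxy, hcx, hcy⟩, rfl⟩
      exact ⟨⟨hx, rfl, hcx⟩, hy, hxy.symm, hcy⟩
    · rintro ⟨⟨hx, rfl, hcx⟩, hy, hyx, hcy⟩
      exact ⟨⟨⟨hx, hy⟩, hyx.symm, hcx, hcy⟩, rfl⟩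
  have hclass : ∀ i ∈ t, (#{x ∈ s | f x = i ∧ χ x = true} : ℝ) +
      #{x ∈ s | f x = i ∧ χ x = false} = m := by
    intro i hi
    have hsplit := card_filter_add_card_filter_not (s := {x ∈ s | f x = i}) (fun x => χ x = true)
    simp only [filter_filter, Bool.not_eq_true] at hsplit
    rw [← hm i hi, ← hsplit]
    push_cast
    rfl
  rw [hsum, hsum, hpairs]
  exact_mod_cast card_mul_sum_mul_le_of_add_eq t _ _ _ hclass

lemma card_filter_mod_eq_of_dvd {a n i : ℕ} (ha : 0 < a) (hdvd : a ∣ n) (hi : i < a) :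
    #{x ∈ Icc 1 n | x % a = i} = n / a := by
  obtain ⟨k, rfl⟩ := hdvd
  have h := Nat.Ioc_filter_modEq_card 0 (a * k) ha i
  rw [show ((a * k : ℕ) - i : ℚ) / a = k + (-i : ℚ) / a by push_cast; field_simp; ring,
    Int.floor_natCast_add, Nat.cast_zero, zero_sub, add_sub_cancel_right,
    max_eq_left (by positivity)] at h
  rw [Nat.mul_div_cancel_left _ ha, ← zero_add 1, Icc_add_one_left_eq_Ioc, ← Nat.cast_inj (R := ℤ),
    ← h]
  congr 2
  exact filter_congr fun x _ => by rw [Nat.ModEq, Nat.mod_eq_of_lt hi]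

def triplePairs (a n : ℕ) : Finset (ℕ × ℕ) :=
  {p ∈ Icc 1 n ×ˢ Icc 1 n | p.1 + a * p.2 ≤ n}

lemma nonMonoTriples_eq (a n : ℕ) (χ : ℕ → Bool) :
    nonMonoTriples a n χ =
      #{p ∈ triplePairs a n | ¬(χ p.1 = χ p.2 ∧ χ p.2 = χ (p.1 + a * p.2))} := by
  rw [nonMonoTriples, triplePairs, filter_filter]

section

variable {a n : ℕ} (χ : ℕ → Bool)

lemma card_triplePairs_ne_fst_snd_le :
    #{p ∈ triplePairs a n | χ p.1 ≠ χ p.2} ≤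
      #{p ∈ Icc 1 n ×ˢ Icc 1 n | p.2 + a * p.1 ≤ n ∧ χ p.1 ≠ χ p.2} := by
  refine card_le_card_of_injOn Prod.swap (fun p hp => ?_) Prod.swap_injective.injOn
  simp only [triplePairs, coe_filter, Set.mem_ofPred_eq, mem_filter, mem_product] at hp ⊢
  exact ⟨⟨hp.1.1.2, hp.1.1.1⟩, hp.1.2, hp.2.symm⟩

lemma card_triplePairs_ne_snd_sum_le :
    #{p ∈ triplePairs a n | χ p.2 ≠ χ (p.1 + a * p.2)} ≤
      #{p ∈ Icc 1 n ×ˢ Icc 1 n | a * p.1 ≤ p.2 ∧ χ p.1 ≠ χ p.2} := by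
  refine card_le_card_of_injOn (fun p => (p.2, p.1 + a * p.2)) (fun p hp => ?_) ?_
  · simp only [triplePairs, coe_filter, Set.mem_ofPred_eq, mem_filter, mem_product,
      mem_Icc] at hp ⊢
    obtain ⟨⟨⟨hx, hy⟩, hle⟩, hne⟩ := hp
    exact ⟨⟨hy, by omega⟩, by omega, hne⟩
  · rintro p - q - h
    obtain ⟨hy, hsum⟩ := Prod.mk.inj h
    rw [hy] at hsum
    exact Prod.ext (by omega) hy

lemma card_triplePairs_ne_fst_sum_le (ha : 0 < a) :
    #{p ∈ triplePairs a n | χ p.1 ≠ χ (p.1 + a * p.2)} ≤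
      #{p ∈ Icc 1 n ×ˢ Icc 1 n | p.1 % a = p.2 % a ∧ χ p.1 = true ∧ χ p.2 = false} := by
  -- List the red endpoint first; injectivity holds because `x < x + a*y`.
  refine card_le_card_of_injOn
    (fun p => if χ p.1 then (p.1, p.1 + a * p.2) else (p.1 + a * p.2, p.1)) ?_ ?_
  · rintro p hp
    simp only [triplePairs, coe_filter, Set.mem_ofPred_eq, mem_filter, mem_product,
      mem_Icc] at hp ⊢
    obtain ⟨⟨⟨hx, hy⟩, hle⟩, hne⟩ := hp
    have hmod : (p.1 + a * p.2) % a = p.1 % a := Nat.add_mul_mod_self_left _ _ _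
    split_ifs with hc
    · exact ⟨⟨hx, by omega, hle⟩, hmod.symm, hc, by simpa [hc] using hne.symm⟩
    · have hc' : χ (p.1 + a * p.2) = true := by simpa [hc] using hne.symm
      exact ⟨⟨⟨by omega, hle⟩, hx⟩, hmod, hc', by simpa using hc⟩
  · have hpos : ∀ p ∈ triplePairs a n, 0 < a * p.2 := fun p hp =>
      Nat.mul_pos ha (mem_Icc.1 (mem_product.1 (mem_filter.1 hp).1).2).1
    rintro p hp q hq h
    have hp' := hpos p (mem_filter.1 (mem_coe.1 hp)).1
    have hq' := hpos q (mem_filter.1 (mem_coe.1 hq)).1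
    dsimp only at h
    split_ifs at h <;> obtain ⟨h1, h2⟩ := Prod.mk.inj h
    · rw [h1, Nat.add_left_cancel_iff, Nat.mul_left_cancel_iff ha] at h2
      exact Prod.ext h1 h2
    · omega
    · omega
    · rw [← h2, Nat.add_left_cancel_iff, Nat.mul_left_cancel_iff ha] at h1
      exact Prod.ext h2 h1

end

theorem lemma_two_general (a n : ℕ) (hdvd : a ∣ n)
    (χ : ℕ → Bool) :
    (2 * nonMonoTriples a n χ : ℝ) ≤
      (((Finset.Icc 1 n).filter (fun x => χ x = true)).card : ℝ) *
        (((Finset.Icc 1 n).filter (fun x => χ x = false)).card : ℝ) / a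
      + (((Finset.Icc 1 n ×ˢ Finset.Icc 1 n).filter
          (fun p => a * p.1 ≤ p.2 ∧ χ p.1 ≠ χ p.2)).card : ℝ)
      + (((Finset.Icc 1 n ×ˢ Finset.Icc 1 n).filter
          (fun p => p.2 + a * p.1 ≤ n ∧ χ p.1 ≠ χ p.2)).card : ℝ) := by
  obtain rfl | ha := Nat.eq_zero_or_pos a
  · obtain rfl := Nat.eq_zero_of_zero_dvd hdvd
    simp [nonMonoTriples]
  have hsplit := two_mul_card_filter_not_mono_eq (triplePairs a n)
    (fun p => χ p.1) (fun p => χ p.2) (fun p => χ (p.1 + a * p.2))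
  rw [← nonMonoTriples_eq] at hsplit
  have h₁ := card_triplePairs_ne_fst_snd_le (a := a) (n := n) χ
  have h₂ := card_triplePairs_ne_snd_sum_le (a := a) (n := n) χ
  have h₃ := card_triplePairs_ne_fst_sum_le (n := n) χ ha
  have hres := card_mul_card_sameFiber_le (Icc 1 n) (range a) (· % a)
    (fun x _ => mem_range.2 (Nat.mod_lt x ha)) (n / a)
    (fun i hi => card_filter_mod_eq_of_dvd ha hdvd (mem_range.1 hi)) χ
  rw [card_range] at hres
  have hres' : (#{p ∈ Icc 1 n ×ˢ Icc 1 n | p.1 % a = p.2 % a ∧ χ p.1 = true ∧ χ p.2 = false} : ℝ)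
      ≤ #{x ∈ Icc 1 n | χ x = true} * #{x ∈ Icc 1 n | χ x = false} / a :=
    (le_div_iff₀' (by positivity)).2 (by exact_mod_cast hres)
  have := (Nat.cast_le (α := ℝ)).2 (hsplit.le.trans (add_le_add_three h₁ h₂ h₃))
  push_cast at this
  linarith

/-- (Lemma 2) For `a ≥ 2`, `a ∣ n`, and a 2-coloring `χ` of `[1,n]`
(`true` = red, `false` = blue): twice the number of non-monochromatic triples is
at most `|R|·|B|/a` plus the number of bichromatic ordered pairs `(x,y)` in
`[1,n]²` with `y − a·x ≥ 0` plus the number of bichromatic ordered pairs `(x,y)`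
with `y + a·x ≤ n`. -/
theorem lemma_two (a n : ℕ) (ha : 2 ≤ a) (hn : 0 < n) (hdvd : a ∣ n)
    (χ : ℕ → Bool) :
    (2 * nonMonoTriples a n χ : ℝ) ≤
      (((Finset.Icc 1 n).filter (fun x => χ x = true)).card : ℝ) *
        (((Finset.Icc 1 n).filter (fun x => χ x = false)).card : ℝ) / a
      + (((Finset.Icc 1 n ×ˢ Finset.Icc 1 n).filter
          (fun p => a * p.1 ≤ p.2 ∧ χ p.1 ≠ χ p.2)).card : ℝ)
      + (((Finset.Icc 1 n ×ˢ Finset.Icc 1 n).filter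
          (fun p => p.2 + a * p.1 ≤ n ∧ χ p.1 ≠ χ p.2)).card : ℝ) :=
  lemma_two_general a n hdvd χ
end

section
/- For every integer a ≥ 2 there is a constant C = C(a) > 0 such that for every positive integer n the two-interval 2-coloring χ of [1,n] defined by coloring x red if x ≤ ⌊(a+1)n/(a²+2a+2)⌋ and blue otherwise satisfies |M_{χ,a}(n) − n²/(2a(a²+2a+2))| ≤ C·n. -/
open Finset

def latticeTriangle (a k : ℕ) : Finset (ℕ × ℕ) :=
  {p ∈ Icc 1 k ×ˢ Icc 1 k | p.1 + a * p.2 ≤ k}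

theorem card_latticeTriangle (a k : ℕ) :
    #(latticeTriangle a k) = ∑ y ∈ Icc 1 k, (k - a * y) := by
  rw [latticeTriangle, card_filter, sum_product_right]
  refine sum_congr rfl fun y _ => ?_
  rw [← card_filter, ← Nat.add_sub_cancel (n := k - a * y) (m := 1), ← Nat.card_Icc]
  congr 1
  ext x
  simp only [mem_filter, mem_Icc]
  omega

theorem two_mul_sum_Icc_sub_mul {R : Type*} [CommRing R] (k a : R) (q : ℕ) :
    2 * ∑ y ∈ Icc 1 q, (k - a * y) = 2 * q * k - a * q * (q + 1) := by
  induction q with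
  | zero => simp
  | succ q ih =>
    rw [sum_Icc_succ_top (by omega), mul_add, ih]
    push_cast
    ring

theorem two_mul_card_latticeTriangle (a k : ℕ) :
    2 * a * #(latticeTriangle a k) + a ^ 2 * (k / a) + (k % a) ^ 2 = k ^ 2 := by
  rcases Nat.eq_zero_or_pos a with rfl | ha
  · simp
  set q := k / a
  set s := k % a
  have hk : a * q + s = k := Nat.div_add_mod k a
  -- only the rows `y ≤ k / a` are nonempty
  have hsum : #(latticeTriangle a k) = ∑ y ∈ Icc 1 q, (k - a * y) := by
    rw [card_latticeTriangle]
    refine (sum_subset (Icc_subset_Icc_right (Nat.div_le_self k a)) fun y hy hyq => ?_).symm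
    simp only [mem_Icc, not_and, not_le] at hy hyq
    have : k < y * a := (Nat.div_lt_iff_lt_mul ha).mp (hyq hy.1)
    rw [mul_comm] at this
    omega
  have hcast : (#(latticeTriangle a k) : ℤ) = ∑ y ∈ Icc 1 q, ((k : ℤ) - a * y) := by
    rw [hsum, Nat.cast_sum]
    refine sum_congr rfl fun y hy => ?_
    have : a * y ≤ a * q := Nat.mul_le_mul_left a (mem_Icc.mp hy).2
    rw [Nat.cast_sub (by omega), Nat.cast_mul]
  clear_value q s
  have hk' : (a : ℤ) * q + s = k := by exact_mod_cast hk
  have h2 : 2 * (#(latticeTriangle a k) : ℤ) = 2 * q * k - a * q * (q + 1) := by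
    rw [hcast, two_mul_sum_Icc_sub_mul]
  zify
  linear_combination (a : ℤ) * h2 + ((s : ℤ) + k - a * q) * hk'

theorem two_mul_card_latticeTriangle_bounds {a : ℕ} (ha : 0 < a) (k : ℕ) :
    2 * a * #(latticeTriangle a k) ≤ k ^ 2 ∧ k ^ 2 ≤ 2 * a * #(latticeTriangle a k) + a * k := by
  have h := two_mul_card_latticeTriangle a k
  have hk := Nat.div_add_mod k a
  have hs : k % a * (k % a) ≤ a * (k % a) := Nat.mul_le_mul_right _ (Nat.mod_lt k ha).le
  exact ⟨h ▸ le_add_right (le_add_right le_rfl), by nlinarith⟩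

theorem card_translate_latticeTriangle {a c N n : ℕ} (ha : 0 < a) (hN : N ≤ n) :
    #{p ∈ Icc 1 n ×ˢ Icc 1 n | c < p.1 ∧ c < p.2 ∧ p.1 + a * p.2 ≤ N}
      = #(latticeTriangle a (N - (a + 1) * c)) := by
  have hac : (a + 1) * c = a * c + c := by ring
  refine card_nbij' (fun p => (p.1 - c, p.2 - c)) (fun p => (p.1 + c, p.2 + c)) ?_ ?_ ?_ ?_
  · rintro ⟨x, y⟩ hp
    simp only [latticeTriangle, coe_filter, mem_product, mem_Icc, Set.mem_ofPred_eq] at hp ⊢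
    have : a * (y - c) + a * c = a * y := by rw [← mul_add, Nat.sub_add_cancel hp.2.2.1.le]
    have : y - c ≤ a * (y - c) := Nat.le_mul_of_pos_left _ ha
    omega
  · rintro ⟨x, y⟩ hp
    simp only [latticeTriangle, coe_filter, mem_product, mem_Icc, Set.mem_ofPred_eq] at hp ⊢
    have : a * (y + c) = a * y + a * c := mul_add a y c
    have : y ≤ a * y := Nat.le_mul_of_pos_left _ ha
    omega
  · rintro ⟨x, y⟩ hp
    simp only [coe_filter, Set.mem_ofPred_eq] at hp
    simp only [Prod.mk.injEq]
    omega
  · rintro ⟨x, y⟩ _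
    simp

theorem monoTriples_decide_le {a n r : ℕ} (ha : 0 < a) (hr : r ≤ n) :
    monoTriples a n (fun x => decide (x ≤ r))
      = #(latticeTriangle a r) + #(latticeTriangle a (n - (a + 1) * r)) := by
  -- the red triples form the untranslated triangle `c = 0`
  have hred := card_translate_latticeTriangle (c := 0) ha hr
  rw [mul_zero, Nat.sub_zero] at hred
  rw [← hred, ← card_translate_latticeTriangle ha le_rfl, ← card_union_of_disjoint,
    ← filter_or, monoTriples]
  · congr 1
    refine filter_congr fun p hp => ?_
    simp only [mem_product, mem_Icc] at hp
    have : p.2 ≤ a * p.2 := Nat.le_mul_of_pos_left _ ha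
    simp only [decide_eq_decide]
    omega
  · refine disjoint_filter.mpr fun p _ hp₁ hp₂ => ?_
    have : p.2 ≤ a * p.2 := Nat.le_mul_of_pos_left _ ha
    omega

theorem add_one_mul_le_of_mul_add_eq {a n r δ : ℕ}
    (h : (a ^ 2 + 2 * a + 2) * r + δ = (a + 1) * n) : (a + 1) * r ≤ n := by
  refine Nat.le_of_mul_le_mul_left ?_ a.succ_pos
  nlinarith

theorem mul_sq_add_sq_eq_of_mul_add_eq {a n r δ : ℕ}
    (h : (a ^ 2 + 2 * a + 2) * r + δ = (a + 1) * n) :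
    (a ^ 2 + 2 * a + 2) * (r ^ 2 + (n - (a + 1) * r) ^ 2) = n ^ 2 + δ ^ 2 := by
  zify [add_one_mul_le_of_mul_add_eq h] at h ⊢
  linear_combination (-(((a : ℤ) + 1) * n - (a ^ 2 + 2 * a + 2) * r + δ)) * h

def twoIntervalColoring (a n : ℕ) : ℕ → Bool :=
  fun x => decide (x ≤ (a + 1) * n / (a ^ 2 + 2 * a + 2))

theorem monoTriples_twoIntervalColoring_bounds {a : ℕ} (ha : 0 < a) (n : ℕ) :
    2 * a * (a ^ 2 + 2 * a + 2) * monoTriples a n (twoIntervalColoring a n)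
        ≤ n ^ 2 + (a ^ 2 + 2 * a + 2) ^ 2 ∧
      n ^ 2 ≤ 2 * a * (a ^ 2 + 2 * a + 2) * monoTriples a n (twoIntervalColoring a n)
        + a * (a ^ 2 + 2 * a + 2) * n := by
  unfold twoIntervalColoring
  have hdiv := Nat.div_add_mod ((a + 1) * n) (a ^ 2 + 2 * a + 2)
  have hr := add_one_mul_le_of_mul_add_eq hdiv
  have hsplit := mul_sq_add_sq_eq_of_mul_add_eq hdiv
  rw [monoTriples_decide_le ha (by nlinarith)]
  have hδ := Nat.pow_lt_pow_left (Nat.mod_lt ((a + 1) * n) (by positivity : 0 < a ^ 2 + 2 * a + 2))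
    two_ne_zero
  set t := a ^ 2 + 2 * a + 2
  set r := (a + 1) * n / t
  set m := n - (a + 1) * r
  have hrm : r + m ≤ n := by
    have : (a + 1) * r = a * r + r := by ring
    omega
  obtain ⟨hr₁, hr₂⟩ := two_mul_card_latticeTriangle_bounds ha r
  obtain ⟨hm₁, hm₂⟩ := two_mul_card_latticeTriangle_bounds ha m
  have hup := Nat.mul_le_mul_left t (add_le_add hr₁ hm₁)
  have hlow := Nat.mul_le_mul_left t (add_le_add hr₂ hm₂)
  have hat := Nat.mul_le_mul_left (a * t) hrm
  constructor <;> nlinarith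

theorem abs_sub_sq_div_le_of_bounds {a t n X : ℕ} (ha : 0 < a) (ht : 0 < t) (hn : 0 < n)
    (hup : 2 * a * t * X ≤ n ^ 2 + t ^ 2) (hlow : n ^ 2 ≤ 2 * a * t * X + a * t * n) :
    |(X : ℝ) - (n : ℝ) ^ 2 / (2 * a * t)| ≤ (t : ℝ) * n := by
  have hD : (0 : ℝ) < 2 * a * t := by positivity
  have hn1 : (1 : ℝ) ≤ n := by exact_mod_cast hn
  have ha1 : (1 : ℝ) ≤ a := by exact_mod_cast ha
  have ht1 : (1 : ℝ) ≤ t := by exact_mod_cast ht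
  rw [sub_div' hD.ne', abs_div, abs_of_pos hD, div_le_iff₀ hD, abs_le]
  have hup' : (2 * a * t * X : ℝ) ≤ n ^ 2 + t ^ 2 := by exact_mod_cast hup
  have hlow' : (n : ℝ) ^ 2 ≤ 2 * a * t * X + a * t * n := by exact_mod_cast hlow
  have h₁ : (a * t * n : ℝ) ≤ a * t * n * (2 * t) :=
    le_mul_of_one_le_right (by positivity) (by linarith)
  have h₂ : (t ^ 2 : ℝ) ≤ t ^ 2 * (2 * a * n) := le_mul_of_one_le_right (by positivity) (by nlinarith)
  constructor <;> nlinarith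

/-- The two-interval coloring (red up to `⌊(a+1)n/(a²+2a+2)⌋`, blue afterwards)
has `n² / (2a(a² + 2a + 2)) + O(n)` monochromatic `(x, y, x + a*y)` triples. -/
theorem two_interval_coloring_monoTriples (a : ℕ) (ha : 2 ≤ a) :
    ∃ C : ℝ, 0 < C ∧ ∀ n : ℕ, 0 < n →
      |(monoTriples a n
          (fun x => decide (x ≤ (a + 1) * n / (a ^ 2 + 2 * a + 2))) : ℝ)
        - (n : ℝ) ^ 2 / (2 * a * ((a : ℝ) ^ 2 + 2 * a + 2))| ≤ C * n := by
  refine ⟨(a : ℝ) ^ 2 + 2 * a + 2, by positivity, fun n hn => ?_⟩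
  obtain ⟨hup, hlow⟩ := monoTriples_twoIntervalColoring_bounds (by omega : 0 < a) n
  exact_mod_cast abs_sub_sq_div_le_of_bounds (by omega) (by positivity) hn hup hlow
end
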